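/- Let n ≥ 2 and let T be any binary tree structure. For every m ≥ 1, the growth function of the class of decision trees with structure T and leaf labels in {1,…,n} satisfies τ_T(m) ≤ Σ_{a=1}^{min{m,n,L_T}} (n)_a · π^a_T(m), where (n)_a = n(n−1)⋯(n−a+1) is the falling factorial; moreover equality holds whenever n = 2 or L_T = 2. -/

import Mathlib

/-- A `c`-partition of a finite set `S`: a set of `c` pairwise disjoint nonempty
subsets (parts) whose union is `S`. -/
def IsPartition {α : Type*} (S : Finset α) (c : ℕ) (P : Finset (Finset α)) : Prop :=
  P.card = c ∧ (∀ p ∈ P, p.Nonempty) ∧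
    (∀ p ∈ P, ∀ q ∈ P, p ≠ q → Disjoint p q) ∧ (∀ x, x ∈ S ↔ ∃ p ∈ P, x ∈ p)

/-- A binary tree structure: either a leaf, or an internal node with a left and a
right subtree structure. -/
inductive TreeStruct : Type where
  | leaf : TreeStruct
  | node : TreeStruct → TreeStruct → TreeStruct
deriving DecidableEq

namespace TreeStruct

/-- The number of leaves of a binary tree structure. -/
def leaves : TreeStruct → ℕ
  | leaf => 1
  | node l r => l.leaves + r.leaves

/-- The number of internal nodes of a binary tree structure. -/
def internals : TreeStruct → ℕ
  | leaf => 0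
  | node l r => l.internals + r.internals + 1

end TreeStruct

/-- A decision tree on `ℝ^ℓ` with labels in `Y`: every leaf carries a label and every
internal node carries a decision rule `(i, θ, s)` with feature `i`, threshold `θ` and
sign `s` (`true` codes `+1`, `false` codes `-1`). -/
inductive DTree (ℓ : ℕ) (Y : Type) : Type where
  | leaf : Y → DTree ℓ Y
  | node : Fin ℓ → ℝ → Bool → DTree ℓ Y → DTree ℓ Y → DTree ℓ Y

namespace DTree

/-- The output of a decision tree on an example `x`: at a node with rule `(i, θ, s)`,
`x` is sent to the left subtree if `sign (x^i - θ) = s` (i.e. `(θ < x^i) = s`) and to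
the right subtree otherwise. -/
noncomputable def eval {ℓ : ℕ} {Y : Type} : DTree ℓ Y → (Fin ℓ → ℝ) → Y
  | leaf y, _ => y
  | node i θ s l r, x => if decide (θ < x i) = s then l.eval x else r.eval x

/-- The underlying structure of a decision tree. -/
def shape {ℓ : ℕ} {Y : Type} : DTree ℓ Y → TreeStruct
  | leaf _ => .leaf
  | node _ _ _ l r => .node l.shape r.shape

end DTree

/-- A partition `P` of a sample `S ⊆ ℝ^ℓ` is realizable by the class of decision trees
with structure `T` if there is a decision tree `t` with structure `T` (labels in `ℕ`)
such that two points of `S` lie in the same part of `P` iff `t` outputs the same label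
on them. -/
def TreeRealizable (ℓ : ℕ) (T : TreeStruct) (S : Finset (Fin ℓ → ℝ))
    (P : Finset (Finset (Fin ℓ → ℝ))) : Prop :=
  ∃ t : DTree ℓ ℕ, t.shape = T ∧
    ∀ x ∈ S, ∀ y ∈ S, ((∃ p ∈ P, x ∈ p ∧ y ∈ p) ↔ t.eval x = t.eval y)

/-- `PartSet ℓ T a S` : the set of `a`-partitions of `S` realizable by the tree class `T`. -/
def PartSet (ℓ : ℕ) (T : TreeStruct) (a : ℕ) (S : Finset (Fin ℓ → ℝ)) :
    Set (Finset (Finset (Fin ℓ → ℝ))) :=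
  {P | IsPartition S a P ∧ TreeRealizable ℓ T S P}

/-- The `a`-partitioning function of the tree class `T` on `ℝ^ℓ`: the largest number of
distinct `a`-partitions realizable by `T` on a sample of `m` points. -/
noncomputable def treePi (ℓ : ℕ) (T : TreeStruct) (a m : ℕ) : ℕ :=
  sSup {n : ℕ | ∃ S : Finset (Fin ℓ → ℝ), S.card = m ∧ n = (PartSet ℓ T a S).ncard}

/-- The growth function of the class of decision trees with structure `T` and leaf
labels in `{1, …, n}` (coded by `Fin n`): the largest number of distinct restrictions
to a sample of `m` points. -/
noncomputable def growth (ℓ : ℕ) (T : TreeStruct) (n m : ℕ) : ℕ :=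
  sSup {N : ℕ | ∃ S : Finset (Fin ℓ → ℝ), S.card = m ∧
    N = {g : {x // x ∈ S} → Fin n |
      ∃ t : DTree ℓ (Fin n), t.shape = T ∧ ∀ x : {x // x ∈ S}, g x = t.eval x.1}.ncard}

/-!
A labelling `g : S → Fin n` of a sample induces the partition of `S` into its level sets. It is
the restriction of a tree of structure `T` exactly when that partition is realizable by `T` (relabel
the leaves), and the labellings inducing a given `a`-partition correspond to the injections of its
parts into `Fin n`, of which there are `(n)_a`. Hence on every nonempty sample the number of
restrictions is exactly `∑ₐ (n)_a · #{realizable a-partitions}`, and taking suprema over samples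
gives the inequality. When only `a = 1, 2` occur, the unique `1`-partition is always realizable,
so a sample maximizing the number of realizable `2`-partitions attains the bound.
-/

namespace DTree

variable {ℓ : ℕ} {Y Z : Type}

def relabel (f : Y → Z) : DTree ℓ Y → DTree ℓ Z
  | leaf y => leaf (f y)
  | node i θ s l r => node i θ s (l.relabel f) (r.relabel f)

@[simp]
lemma shape_relabel (f : Y → Z) (t : DTree ℓ Y) : (t.relabel f).shape = t.shape := by
  induction t with
  | leaf => rfl
  | node i θ s l r ihl ihr => simp [relabel, shape, ihl, ihr]

@[simp]
lemma eval_relabel (f : Y → Z) (t : DTree ℓ Y) (x : Fin ℓ → ℝ) :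
    (t.relabel f).eval x = f (t.eval x) := by
  induction t with
  | leaf => rfl
  | node i θ s l r ihl ihr => simp only [relabel, eval, ihl, ihr]; split_ifs <;> rfl

def leafLabels [DecidableEq Y] : DTree ℓ Y → Finset Y
  | leaf y => {y}
  | node _ _ _ l r => l.leafLabels ∪ r.leafLabels

lemma eval_mem_leafLabels [DecidableEq Y] (t : DTree ℓ Y) (x : Fin ℓ → ℝ) :
    t.eval x ∈ t.leafLabels := by
  induction t with
  | leaf => simp [eval, leafLabels]
  | node i θ s l r ihl ihr =>
    simp only [eval, leafLabels, Finset.mem_union]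
    split_ifs
    exacts [Or.inl ihl, Or.inr ihr]

lemma card_leafLabels_le [DecidableEq Y] (t : DTree ℓ Y) : t.leafLabels.card ≤ t.shape.leaves := by
  induction t with
  | leaf => simp [leafLabels, shape, TreeStruct.leaves]
  | node i θ s l r ihl ihr =>
    exact (Finset.card_union_le _ _).trans (Nat.add_le_add ihl ihr)

def const (i : Fin ℓ) (y : Y) : TreeStruct → DTree ℓ Y
  | .leaf => leaf y
  | .node l r => node i 0 true (const i y l) (const i y r)

@[simp]
lemma shape_const (i : Fin ℓ) (y : Y) (T : TreeStruct) : (const i y T).shape = T := by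
  induction T with
  | leaf => rfl
  | node l r ihl ihr => simp [const, shape, ihl, ihr]

@[simp]
lemma eval_const (i : Fin ℓ) (y : Y) (T : TreeStruct) (x : Fin ℓ → ℝ) :
    (const i y T).eval x = y := by
  induction T with
  | leaf => rfl
  | node l r ihl ihr => simp [const, eval, ihl, ihr]

end DTree

noncomputable def Function.Surjective.embeddingEquiv {X Q : Type*} {π : X → Q}
    (hπ : Function.Surjective π) (β : Type*) :
    (Q ↪ β) ≃ {g : X → β // ∀ x y, π x = π y ↔ g x = g y} where
  toFun f := ⟨f ∘ π, fun _ _ => f.injective.eq_iff.symm⟩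
  invFun g := ⟨g.1 ∘ Function.surjInv hπ, fun p q h => by
    simpa [Function.surjInv_eq] using (g.2 _ _).2 h⟩
  left_inv f := by ext q; exact congrArg f (Function.surjInv_eq hπ q)
  right_inv g := by ext x; exact (g.2 _ _).1 (Function.surjInv_eq hπ (π x))

section Partition

variable {α β γ : Type*} {S : Finset α} {a : ℕ} {P : Finset (Finset α)}

def IsKernel (P : Finset (Finset α)) (g : S → β) : Prop :=
  ∀ x y : S, (∃ p ∈ P, (x : α) ∈ p ∧ (y : α) ∈ p) ↔ g x = g y

lemma IsKernel.comp {g : S → β} {F : β → γ} (hF : Function.Injective F) (hg : IsKernel P g) :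
    IsKernel P (F ∘ g) :=
  fun x y => (hg x y).trans hF.eq_iff.symm

lemma IsKernel.factorsThrough {g : S → β} {h : S → γ} (hg : IsKernel P g) (hh : IsKernel P h) :
    Function.FactorsThrough g h :=
  fun x y hxy => (hg x y).1 ((hh x y).2 hxy)

namespace IsPartition

lemma subset_of_mem (hP : IsPartition S a P) {p : Finset α} (hp : p ∈ P) : p ⊆ S :=
  fun x hx => (hP.2.2.2 x).2 ⟨p, hp, hx⟩

noncomputable def partOf (hP : IsPartition S a P) (x : S) : P :=
  ⟨_, ((hP.2.2.2 x).1 x.2).choose_spec.1⟩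

lemma mem_partOf (hP : IsPartition S a P) (x : S) : (x : α) ∈ (hP.partOf x : Finset α) :=
  ((hP.2.2.2 x).1 x.2).choose_spec.2

lemma partOf_eq_iff (hP : IsPartition S a P) {x : S} {p : P} :
    hP.partOf x = p ↔ (x : α) ∈ (p : Finset α) := by
  refine ⟨fun h => h ▸ hP.mem_partOf x, fun hx => Subtype.ext ?_⟩
  by_contra hne
  exact Finset.disjoint_left.1 (hP.2.2.1 _ (hP.partOf x).2 _ p.2 hne) (hP.mem_partOf x) hx

lemma partOf_surjective (hP : IsPartition S a P) : Function.Surjective hP.partOf := fun p =>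
  have ⟨x, hx⟩ := hP.2.1 p p.2
  ⟨⟨x, hP.subset_of_mem p.2 hx⟩, (hP.partOf_eq_iff).2 hx⟩

lemma isKernel_iff (hP : IsPartition S a P) {g : S → β} :
    IsKernel P g ↔ ∀ x y, hP.partOf x = hP.partOf y ↔ g x = g y := by
  have same_part (x y : S) : (∃ p ∈ P, (x : α) ∈ p ∧ (y : α) ∈ p) ↔ hP.partOf x = hP.partOf y :=
    ⟨fun ⟨p, hp, hx, hy⟩ => ((hP.partOf_eq_iff (p := ⟨p, hp⟩)).2 hx).trans
      ((hP.partOf_eq_iff (p := ⟨p, hp⟩)).2 hy).symm,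
     fun h => ⟨_, (hP.partOf x).2, hP.mem_partOf x, h ▸ hP.mem_partOf y⟩⟩
  simp only [IsKernel, same_part]

lemma card_le_card (hP : IsPartition S a P) : a ≤ S.card := by
  simpa [hP.1] using Fintype.card_le_of_surjective _ hP.partOf_surjective

lemma nat_card_isKernel (hP : IsPartition S a P) [Fintype β] :
    Nat.card {g : S → β // IsKernel P g} = (Fintype.card β).descFactorial a := by
  rw [← Nat.card_congr ((hP.partOf_surjective.embeddingEquiv β).trans
      (Equiv.subtypeEquivRight fun g => hP.isKernel_iff.symm)),
    Nat.card_eq_fintype_card, Fintype.card_embedding_eq, Fintype.card_coe, hP.1]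

lemma card_le_of_isKernel (hP : IsPartition S a P) {g : S → β} (hg : IsKernel P g)
    {B : Finset β} (hB : ∀ x, g x ∈ B) : a ≤ B.card := by
  have hg' : IsKernel P fun x => (⟨g x, hB x⟩ : B) := fun x y => (hg x y).trans (by simp)
  simpa [hP.1] using Fintype.card_le_of_embedding
    ((hP.partOf_surjective.embeddingEquiv B).symm ⟨_, hP.isKernel_iff.1 hg'⟩)

end IsPartition

lemma isPartition_one_iff (hS : S.Nonempty) : IsPartition S 1 P ↔ P = {S} := by
  constructor
  · intro hP
    obtain ⟨p, rfl⟩ := Finset.card_eq_one.1 hP.1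
    have := hP.2.2.2
    simp only [Finset.mem_singleton, exists_eq_left] at this
    rw [Finset.ext this]
  · rintro rfl
    refine ⟨Finset.card_singleton _, by simpa using hS, ?_, by simp⟩
    simp only [Finset.mem_singleton]
    rintro _ rfl _ rfl h
    exact absurd rfl h

def levelSet [DecidableEq β] (g : S → β) (b : β) : Finset α :=
  (Finset.univ.filter (g · = b)).map (Function.Embedding.subtype _)

lemma mem_levelSet [DecidableEq β] {g : S → β} {b : β} {z : α} :
    z ∈ levelSet g b ↔ ∃ h : z ∈ S, g ⟨z, h⟩ = b := by
  simp [levelSet]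

variable [DecidableEq α] [DecidableEq β]

def kerPartition (g : S → β) : Finset (Finset α) :=
  Finset.univ.image fun x => levelSet g (g x)

lemma isKernel_kerPartition (g : S → β) : IsKernel (kerPartition g) g := by
  intro x y
  simp only [kerPartition, Finset.mem_image, Finset.mem_univ, true_and]
  constructor
  · rintro ⟨_, ⟨z, rfl⟩, hx, hy⟩
    obtain ⟨_, hx⟩ := mem_levelSet.1 hx
    obtain ⟨_, hy⟩ := mem_levelSet.1 hy
    exact hx.trans hy.symm
  · intro h
    exact ⟨_, ⟨x, rfl⟩, mem_levelSet.2 ⟨x.2, rfl⟩, mem_levelSet.2 ⟨y.2, h.symm⟩⟩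

lemma isPartition_kerPartition (g : S → β) :
    IsPartition S (kerPartition g).card (kerPartition g) := by
  refine ⟨rfl, ?_, ?_, fun z => ⟨fun hz => ?_, fun ⟨p, hp, hz⟩ => ?_⟩⟩
  · simp only [kerPartition, Finset.mem_image, Finset.mem_univ, true_and]
    rintro _ ⟨x, rfl⟩
    exact ⟨x, mem_levelSet.2 ⟨x.2, rfl⟩⟩
  · simp only [kerPartition, Finset.mem_image, Finset.mem_univ, true_and]
    rintro _ ⟨x, rfl⟩ _ ⟨y, rfl⟩ hne
    refine Finset.disjoint_left.2 fun z hzx hzy => hne ?_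
    obtain ⟨_, hx⟩ := mem_levelSet.1 hzx
    obtain ⟨_, hy⟩ := mem_levelSet.1 hzy
    rw [← hx, ← hy]
  · exact ⟨_, Finset.mem_image_of_mem _ (Finset.mem_univ ⟨z, hz⟩), mem_levelSet.2 ⟨hz, rfl⟩⟩
  · simp only [kerPartition, Finset.mem_image, Finset.mem_univ, true_and] at hp
    obtain ⟨x, rfl⟩ := hp
    exact (mem_levelSet.1 hz).1

lemma IsPartition.eq_kerPartition (hP : IsPartition S a P) {g : S → β} (hg : IsKernel P g) :
    P = kerPartition g := by
  have hpart (x : S) : (hP.partOf x : Finset α) = levelSet g (g x) := by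
    ext z
    rw [mem_levelSet]
    refine ⟨fun hz => ⟨hP.subset_of_mem (hP.partOf x).2 hz, ?_⟩, fun ⟨hzS, hz⟩ => ?_⟩
    · exact (hP.isKernel_iff.1 hg _ _).1 ((hP.partOf_eq_iff).2 hz)
    · exact (hP.isKernel_iff.1 hg ⟨z, hzS⟩ x).2 hz ▸ hP.mem_partOf ⟨z, hzS⟩
  ext p
  simp only [kerPartition, Finset.mem_image, Finset.mem_univ, true_and, ← hpart]
  exact ⟨fun hp => (hP.partOf_surjective ⟨p, hp⟩).imp fun x hx => by rw [hx],
    fun ⟨x, hx⟩ => hx ▸ (hP.partOf x).2⟩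

end Partition

section Restrictions

variable {ℓ : ℕ} {T : TreeStruct} {S : Finset (Fin ℓ → ℝ)} {Y Z : Type}

def restrictions (ℓ : ℕ) (T : TreeStruct) (Y : Type) (S : Finset (Fin ℓ → ℝ)) : Set (S → Y) :=
  {g | ∃ t : DTree ℓ Y, t.shape = T ∧ ∀ x : S, g x = t.eval x}

lemma comp_mem_restrictions (F : Y → Z) {g : S → Y} (hg : g ∈ restrictions ℓ T Y S) :
    F ∘ g ∈ restrictions ℓ T Z S := by
  obtain ⟨t, hT, ht⟩ := hg
  exact ⟨t.relabel F, by rw [DTree.shape_relabel, hT], fun x => by simp [ht x]⟩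

lemma treeRealizable_iff {P : Finset (Finset (Fin ℓ → ℝ))} :
    TreeRealizable ℓ T S P ↔ ∃ g ∈ restrictions ℓ T ℕ S, IsKernel P g := by
  constructor
  · rintro ⟨t, hT, ht⟩
    exact ⟨fun x => t.eval x, ⟨t, hT, fun _ => rfl⟩, fun x y => ht x x.2 y y.2⟩
  · rintro ⟨g, ⟨t, hT, ht⟩, hg⟩
    exact ⟨t, hT, fun x hx y hy => by simpa [ht] using hg ⟨x, hx⟩ ⟨y, hy⟩⟩

lemma mem_restrictions_iff_treeRealizable {n : ℕ} (hS : S.Nonempty)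
    {P : Finset (Finset (Fin ℓ → ℝ))} {g : S → Fin n} (hg : IsKernel P g) :
    g ∈ restrictions ℓ T (Fin n) S ↔ TreeRealizable ℓ T S P := by
  rw [treeRealizable_iff]
  constructor
  · exact fun hgT => ⟨_, comp_mem_restrictions Fin.val hgT, hg.comp Fin.val_injective⟩
  · rintro ⟨h, hhT, hh⟩
    have hgh : Function.extend h g (fun _ => g ⟨_, hS.choose_spec⟩) ∘ h = g :=
      funext ((hg.factorsThrough hh).extend_apply _)
    exact hgh ▸ comp_mem_restrictions _ hhT

lemma IsPartition.card_le_leaves {a : ℕ} {P : Finset (Finset (Fin ℓ → ℝ))}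
    (hP : IsPartition S a P) (hT : TreeRealizable ℓ T S P) : a ≤ T.leaves := by
  obtain ⟨g, ⟨t, rfl, ht⟩, hg⟩ := treeRealizable_iff.1 hT
  exact (hP.card_le_of_isKernel hg fun x => ht x ▸ t.eval_mem_leafLabels x).trans
    t.card_leafLabels_le

end Restrictions

section Counting

open Classical

variable {ℓ : ℕ} {T : TreeStruct} {S : Finset (Fin ℓ → ℝ)} {n a : ℕ}

noncomputable def realizablePartitions (ℓ : ℕ) (T : TreeStruct) (a : ℕ) (S : Finset (Fin ℓ → ℝ)) :
    Finset (Finset (Finset (Fin ℓ → ℝ))) :=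
  S.powerset.powerset.filter (· ∈ PartSet ℓ T a S)

lemma mem_realizablePartitions {P : Finset (Finset (Fin ℓ → ℝ))} :
    P ∈ realizablePartitions ℓ T a S ↔ P ∈ PartSet ℓ T a S := by
  simp only [realizablePartitions, Finset.mem_filter, Finset.mem_powerset, and_iff_right_iff_imp]
  exact fun hP p hp => Finset.mem_powerset.2 (hP.1.subset_of_mem hp)

lemma ncard_partSet : (PartSet ℓ T a S).ncard = (realizablePartitions ℓ T a S).card := by
  rw [← Set.ncard_coe_finset]
  congr
  ext
  exact mem_realizablePartitions.symm

lemma card_filter_kerPartition_eq (hS : S.Nonempty) {P : Finset (Finset (Fin ℓ → ℝ))}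
    (hP : P ∈ PartSet ℓ T a S) :
    {g ∈ (restrictions ℓ T (Fin n) S).toFinset | kerPartition g = P}.card = n.descFactorial a := by
  have hfilter : {g ∈ (restrictions ℓ T (Fin n) S).toFinset | kerPartition g = P} =
      Finset.univ.filter (IsKernel P) := by
    ext g
    simp only [Finset.mem_filter, Set.mem_toFinset, Finset.mem_univ, true_and]
    constructor
    · rintro ⟨-, rfl⟩
      exact isKernel_kerPartition g
    · intro hg
      exact ⟨(mem_restrictions_iff_treeRealizable hS hg).2 hP.2, (hP.1.eq_kerPartition hg).symm⟩
  rw [hfilter, ← Fintype.card_subtype, ← Nat.card_eq_fintype_card, hP.1.nat_card_isKernel,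
    Fintype.card_fin]

theorem ncard_restrictions_eq_sum (hS : S.Nonempty) :
    (restrictions ℓ T (Fin n) S).ncard =
      ∑ a ∈ Finset.Icc 1 (min S.card (min n T.leaves)),
        n.descFactorial a * (PartSet ℓ T a S).ncard := by
  set K := min S.card (min n T.leaves)
  have hmaps : Set.MapsTo (kerPartition (S := S) (β := Fin n))
      ↑(restrictions ℓ T (Fin n) S).toFinset
      ↑((Finset.Icc 1 K).biUnion fun a => realizablePartitions ℓ T a S) := by
    intro g hg
    rw [Finset.mem_coe, Set.mem_toFinset] at hg
    have hP := isPartition_kerPartition g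
    have hreal := (mem_restrictions_iff_treeRealizable hS (isKernel_kerPartition g)).1 hg
    simp only [Finset.coe_biUnion, Finset.coe_Icc, Set.mem_iUnion, Finset.mem_coe,
      mem_realizablePartitions, Set.mem_Icc, exists_prop]
    refine ⟨_, ⟨?_, le_min hP.card_le_card (le_min ?_ (hP.card_le_leaves hreal))⟩, hP, hreal⟩
    · obtain ⟨x, hx⟩ := hS
      exact Finset.card_pos.2 ⟨_, Finset.mem_image_of_mem _ (Finset.mem_univ ⟨x, hx⟩)⟩
    · simpa using hP.card_le_of_isKernel (isKernel_kerPartition g) (B := Finset.univ) (by simp)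
  have hdisj : Set.PairwiseDisjoint ↑(Finset.Icc 1 K) (realizablePartitions ℓ T · S) := by
    intro a _ b _ hab
    refine Finset.disjoint_left.2 fun P hPa hPb => hab ?_
    exact (mem_realizablePartitions.1 hPa).1.1.symm.trans (mem_realizablePartitions.1 hPb).1.1
  rw [Set.ncard_eq_toFinset_card', Finset.card_eq_sum_card_fiberwise hmaps,
    Finset.sum_biUnion hdisj]
  refine Finset.sum_congr rfl fun a _ => ?_
  rw [Finset.sum_congr rfl fun P hP => card_filter_kerPartition_eq hS
    (mem_realizablePartitions.1 hP), Finset.sum_const, smul_eq_mul, ncard_partSet, mul_comm]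

end Counting

section Suprema

variable {ℓ : ℕ} {T : TreeStruct} {S : Finset (Fin ℓ → ℝ)} {n a m : ℕ}

lemma bddAbove_ncard_partSet :
    BddAbove {N | ∃ S : Finset (Fin ℓ → ℝ), S.card = m ∧ N = (PartSet ℓ T a S).ncard} := by
  classical
  refine ⟨2 ^ 2 ^ m, ?_⟩
  rintro _ ⟨S, rfl, rfl⟩
  rw [ncard_partSet]
  exact (Finset.card_filter_le _ _).trans (by simp [Finset.card_powerset])

lemma ncard_partSet_le_treePi (hS : S.card = m) : (PartSet ℓ T a S).ncard ≤ treePi ℓ T a m :=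
  le_csSup bddAbove_ncard_partSet ⟨S, hS, rfl⟩

lemma exists_ncard_partSet_eq_treePi (hℓ : 1 ≤ ℓ) (T : TreeStruct) (a m : ℕ) :
    ∃ S : Finset (Fin ℓ → ℝ), S.card = m ∧ (PartSet ℓ T a S).ncard = treePi ℓ T a m := by
  have : Nonempty (Fin ℓ) := ⟨⟨0, hℓ⟩⟩
  obtain ⟨S, hS⟩ := Infinite.exists_subset_card_eq (Fin ℓ → ℝ) m
  obtain ⟨S', hS', h⟩ : treePi ℓ T a m ∈
      {N | ∃ S : Finset (Fin ℓ → ℝ), S.card = m ∧ N = (PartSet ℓ T a S).ncard} :=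
    Nat.sSup_mem ⟨_, S, hS, rfl⟩ bddAbove_ncard_partSet
  exact ⟨S', hS', h.symm⟩

lemma ncard_partSet_one (hℓ : 1 ≤ ℓ) (hS : S.Nonempty) : (PartSet ℓ T 1 S).ncard = 1 := by
  have : PartSet ℓ T 1 S = {{S}} := by
    ext P
    simp only [PartSet, Set.mem_ofPred_eq, Set.mem_singleton_iff, isPartition_one_iff hS,
      and_iff_left_iff_imp]
    rintro rfl
    exact ⟨DTree.const ⟨0, hℓ⟩ 0 T, DTree.shape_const .., fun x hx y hy => by simp [hx, hy]⟩
  rw [this, Set.ncard_singleton]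

lemma treePi_one (hℓ : 1 ≤ ℓ) (hm : 1 ≤ m) : treePi ℓ T 1 m = 1 := by
  obtain ⟨S, hS, h⟩ := exists_ncard_partSet_eq_treePi hℓ T 1 m
  rw [← h, ncard_partSet_one hℓ (Finset.card_pos.1 (by omega))]

lemma growth_le {B : ℕ} (h : ∀ S : Finset (Fin ℓ → ℝ), S.card = m →
    (restrictions ℓ T (Fin n) S).ncard ≤ B) : growth ℓ T n m ≤ B :=
  csSup_le' <| by
    rintro _ ⟨S, hS, rfl⟩
    exact h S hS

lemma ncard_restrictions_le_growth (hS : S.card = m) :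
    (restrictions ℓ T (Fin n) S).ncard ≤ growth ℓ T n m := by
  refine le_csSup ⟨n ^ m, ?_⟩ ⟨S, hS, rfl⟩
  rintro _ ⟨S, rfl, rfl⟩
  exact (Set.ncard_le_card _).trans_eq (by simp)

end Suprema

theorem growth_le_sum_descFactorial_partitioning_general
    (ℓ n : ℕ) (hℓ : 1 ≤ ℓ) (T : TreeStruct) (m : ℕ) (hm : 1 ≤ m) :
    growth ℓ T n m ≤
      (∑ a ∈ Finset.Icc 1 (min m (min n T.leaves)),
        n.descFactorial a * treePi ℓ T a m) ∧
    ((n = 2 ∨ T.leaves = 2) →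
      growth ℓ T n m =
        ∑ a ∈ Finset.Icc 1 (min m (min n T.leaves)),
          n.descFactorial a * treePi ℓ T a m) := by
  have hcount (S : Finset (Fin ℓ → ℝ)) (hS : S.card = m) :
      (restrictions ℓ T (Fin n) S).ncard = ∑ a ∈ Finset.Icc 1 (min m (min n T.leaves)),
        n.descFactorial a * (PartSet ℓ T a S).ncard := by
    rw [ncard_restrictions_eq_sum (Finset.card_pos.1 (by omega)), hS]
  have hle : growth ℓ T n m ≤ ∑ a ∈ Finset.Icc 1 (min m (min n T.leaves)),
      n.descFactorial a * treePi ℓ T a m :=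
    growth_le fun S hS => (hcount S hS).trans_le <|
      Finset.sum_le_sum fun a _ => Nat.mul_le_mul_left _ (ncard_partSet_le_treePi hS)
  refine ⟨hle, fun h2 => hle.antisymm ?_⟩
  obtain ⟨S, hS, hS2⟩ := exists_ncard_partSet_eq_treePi hℓ T 2 m
  calc _ = ∑ a ∈ Finset.Icc 1 (min m (min n T.leaves)),
        n.descFactorial a * (PartSet ℓ T a S).ncard := by
        refine Finset.sum_congr rfl fun a ha => ?_
        obtain rfl | rfl : a = 1 ∨ a = 2 := by rw [Finset.mem_Icc] at ha; omega
        · rw [treePi_one hℓ hm, ncard_partSet_one hℓ (Finset.card_pos.1 (by omega))]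
        · rw [hS2]
    _ = (restrictions ℓ T (Fin n) S).ncard := (hcount S hS).symm
    _ ≤ growth ℓ T n m := ncard_restrictions_le_growth hS

theorem growth_le_sum_descFactorial_partitioning
    (ℓ n : ℕ) (hℓ : 1 ≤ ℓ) (hn : 2 ≤ n) (T : TreeStruct) (m : ℕ) (hm : 1 ≤ m) :
    growth ℓ T n m ≤
      (∑ a ∈ Finset.Icc 1 (min m (min n T.leaves)),
        n.descFactorial a * treePi ℓ T a m) ∧
    ((n = 2 ∨ T.leaves = 2) →
      growth ℓ T n m =
        ∑ a ∈ Finset.Icc 1 (min m (min n T.leaves)),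
          n.descFactorial a * treePi ℓ T a m) :=
  growth_le_sum_descFactorial_partitioning_general ℓ n hℓ T m hm
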